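/- arXiv:1611.05771 — 3 statements merged into one kernel-verified Lean document; each statement's English description precedes it below -/
import Mathlib

section
/- Assume E[W²] = ∫₀^∞ x² μ_W(dx) < ∞. Let β(x) be the maximal solution of the fixed-point equation f(x) = 1 − exp(−x·λ·∫₀^∞ y f(y) μ_W(dy)) for x ≥ 0, and set β̂ = ∫₀^∞ β(x) μ_W(dx). Then β̂ > 0 if and only if λ·E[W²] > 1. -/
/-!
Every solution `f` of the fixed-point equation is, on `x ≥ 0`, the profile
`survivalProfile λ b x = 1 - e^{-x λ b}` with `b = ∫ y f(y) dμ` a fixed point of the scalar map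
`Φ(b) = survivalMap μ λ b = ∫ y (1 - e^{-y λ b}) dμ(y)`.
Since `1 - e^{-t} < t` for `t > 0`, a fixed point `b > 0` gives `b < λ b E W²`, i.e. `λ E W² > 1`.
Conversely `Φ(b) / b → λ E W²` as `b → 0⁺` by dominated convergence while `Φ ≤ E W`, so if
`λ E W² > 1` the intermediate value theorem yields a fixed point `b > 0`; its profile has positive
integral and lies below `β`. Comparison with the zero solution gives `β ≥ 0`, hence the fixed point
attached to `β` is `≥ 0`, and it is `> 0` exactly when `β̂ > 0`.
-/

open MeasureTheory Filter Set Topology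

section MeasuresOnReals

variable {μ : Measure ℝ}

lemma integrable_of_integrable_sq [IsFiniteMeasure μ] (h : Integrable (fun x => x ^ 2) μ) :
    Integrable (fun x : ℝ => x) μ :=
  ((memLp_two_iff_integrable_sq aestronglyMeasurable_id).2 h).integrable one_le_two

lemma integral_pos_of_pos_on_Ioi {f : ℝ → ℝ} (hμ : 0 < μ (Ioi 0)) (hf : 0 ≤ᵐ[μ] f)
    (hfi : Integrable f μ) (hpos : ∀ y, 0 < y → 0 < f y) : 0 < ∫ y, f y ∂μ :=
  (integral_pos_iff_support_of_nonneg_ae hf hfi).2 <|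
    hμ.trans_le (measure_mono fun y hy => (hpos y hy).ne')

lemma measure_Ioi_pos_of_integral_mul_ne_zero {g : ℝ → ℝ} (hμ : ∀ᵐ y ∂μ, 0 ≤ y)
    (h : ∫ y, y * g y ∂μ ≠ 0) : 0 < μ (Ioi 0) := by
  refine pos_iff_ne_zero.2 fun h0 => h (integral_eq_zero_of_ae ?_)
  filter_upwards [hμ, measure_eq_zero_iff_ae_notMem.1 h0] with y hy hy'
  simp [le_antisymm (not_lt.1 hy') hy]

end MeasuresOnReals

noncomputable def survivalProfile (lam b x : ℝ) : ℝ := 1 - Real.exp (-(x * lam * b))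

noncomputable def survivalMap (μ : Measure ℝ) (lam b : ℝ) : ℝ :=
  ∫ y, y * survivalProfile lam b y ∂μ

def IsSurvivalFixedPoint (μ : Measure ℝ) (lam : ℝ) (f : ℝ → ℝ) : Prop :=
  ∀ x, 0 ≤ x → f x = survivalProfile lam (∫ y, y * f y ∂μ) x

section SurvivalProfile

variable {lam b x : ℝ}

@[simp]
lemma survivalProfile_zero_right (lam x : ℝ) : survivalProfile lam 0 x = 0 := by
  simp [survivalProfile]

@[fun_prop]
lemma continuous_survivalProfile (lam b : ℝ) : Continuous (survivalProfile lam b) := by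
  unfold survivalProfile; fun_prop

lemma survivalProfile_le (lam b x : ℝ) : survivalProfile lam b x ≤ x * lam * b := by
  unfold survivalProfile
  linarith [Real.one_sub_le_exp_neg (x * lam * b)]

lemma survivalProfile_lt (h : x * lam * b ≠ 0) : survivalProfile lam b x < x * lam * b := by
  unfold survivalProfile
  linarith [Real.one_sub_lt_exp_neg h]

lemma survivalProfile_le_one (lam b x : ℝ) : survivalProfile lam b x ≤ 1 :=
  sub_le_self 1 (Real.exp_pos _).le

lemma survivalProfile_nonneg (hx : 0 ≤ x) (hlam : 0 ≤ lam) (hb : 0 ≤ b) :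
    0 ≤ survivalProfile lam b x :=
  sub_nonneg.2 (Real.exp_le_one_iff.2 (neg_nonpos.2 (by positivity)))

lemma survivalProfile_pos (hx : 0 < x) (hlam : 0 < lam) (hb : 0 < b) :
    0 < survivalProfile lam b x :=
  sub_pos.2 (Real.exp_lt_one_iff.2 (neg_neg_of_pos (by positivity)))

lemma hasDerivAt_survivalProfile (lam x : ℝ) :
    HasDerivAt (fun b => survivalProfile lam b x) (x * lam) 0 := by
  have h := (((hasDerivAt_id (0 : ℝ)).const_mul (x * lam)).neg.exp).const_sub 1
  simpa [survivalProfile] using h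

lemma mul_survivalProfile_le (hx : 0 ≤ x) : x * survivalProfile lam b x ≤ lam * b * x ^ 2 :=
  (mul_le_mul_of_nonneg_left (survivalProfile_le lam b x) hx).trans_eq (by ring)

lemma mul_survivalProfile_lt (hx : 0 < x) (hlam : 0 < lam) (hb : 0 < b) :
    x * survivalProfile lam b x < lam * b * x ^ 2 :=
  (mul_lt_mul_of_pos_left (survivalProfile_lt (by positivity)) hx).trans_eq (by ring)

lemma norm_mul_survivalProfile_le (hx : 0 ≤ x) (hlam : 0 ≤ lam) (hb : 0 ≤ b) :
    ‖x * survivalProfile lam b x‖ ≤ x := by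
  rw [Real.norm_eq_abs, abs_of_nonneg (mul_nonneg hx (survivalProfile_nonneg hx hlam hb))]
  exact mul_le_of_le_one_right hx (survivalProfile_le_one lam b x)

end SurvivalProfile

section SurvivalMap

variable {μ : Measure ℝ} {lam b : ℝ}

lemma integrable_survivalProfile [IsFiniteMeasure μ] (hμ : ∀ᵐ y ∂μ, 0 ≤ y) (hlam : 0 ≤ lam)
    (hb : 0 ≤ b) : Integrable (survivalProfile lam b) μ := by
  refine .of_bound (continuous_survivalProfile lam b).aestronglyMeasurable 1 ?_
  filter_upwards [hμ] with y hy
  rw [Real.norm_eq_abs, abs_of_nonneg (survivalProfile_nonneg hy hlam hb)]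
  exact survivalProfile_le_one lam b y

lemma integrable_mul_survivalProfile (hμ : ∀ᵐ y ∂μ, 0 ≤ y)
    (hid : Integrable (fun y => y) μ) (hlam : 0 ≤ lam) (hb : 0 ≤ b) :
    Integrable (fun y => y * survivalProfile lam b y) μ :=
  hid.mono' (by fun_prop) <| by
    filter_upwards [hμ] with y hy using norm_mul_survivalProfile_le hy hlam hb

lemma integral_survivalProfile_pos [IsFiniteMeasure μ] (hμ : ∀ᵐ y ∂μ, 0 ≤ y)
    (hμpos : 0 < μ (Ioi 0)) (hlam : 0 < lam) (hb : 0 < b) :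
    0 < ∫ y, survivalProfile lam b y ∂μ :=
  integral_pos_of_pos_on_Ioi hμpos
    (by filter_upwards [hμ] with y hy using survivalProfile_nonneg hy hlam.le hb.le)
    (integrable_survivalProfile hμ hlam.le hb.le) fun _ hy => survivalProfile_pos hy hlam hb

lemma survivalMap_le_integral (hμ : ∀ᵐ y ∂μ, 0 ≤ y) (hid : Integrable (fun y => y) μ)
    (hlam : 0 ≤ lam) (hb : 0 ≤ b) : survivalMap μ lam b ≤ ∫ y, y ∂μ :=
  integral_mono_ae (integrable_mul_survivalProfile hμ hid hlam hb) hid <| by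
    filter_upwards [hμ] with y hy using
      (Real.le_norm_self _).trans (norm_mul_survivalProfile_le hy hlam hb)

lemma continuousOn_survivalMap (hμ : ∀ᵐ y ∂μ, 0 ≤ y) (hid : Integrable (fun y => y) μ)
    (hlam : 0 ≤ lam) : ContinuousOn (survivalMap μ lam) (Ici 0) := by
  refine continuousOn_of_dominated (fun _ _ => by fun_prop)
    (fun b hb => ?_) hid (ae_of_all _ fun y => ?_)
  · filter_upwards [hμ] with y hy using norm_mul_survivalProfile_le hy hlam hb
  · exact (continuous_const.mul (by unfold survivalProfile; fun_prop)).continuousOn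

lemma tendsto_survivalMap_div (hμ : ∀ᵐ y ∂μ, 0 ≤ y) (hW2 : Integrable (fun y => y ^ 2) μ)
    (hlam : 0 ≤ lam) :
    Tendsto (fun b => survivalMap μ lam b / b) (𝓝[>] 0) (𝓝 (lam * ∫ y, y ^ 2 ∂μ)) := by
  simp only [survivalMap, ← integral_div, ← integral_const_mul]
  refine tendsto_integral_filter_of_dominated_convergence (fun y => lam * y ^ 2)
    (Eventually.of_forall fun _ => by fun_prop) ?_ (hW2.const_mul lam)
    (ae_of_all _ fun y => ?_)
  · filter_upwards [self_mem_nhdsWithin] with b (hb : 0 < b)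
    filter_upwards [hμ] with y hy
    rw [Real.norm_eq_abs, abs_of_nonneg (div_nonneg (mul_nonneg hy
      (survivalProfile_nonneg hy hlam hb.le)) hb.le), div_le_iff₀ hb]
    exact (mul_survivalProfile_le hy).trans_eq (by ring)
  · have h := ((hasDerivAt_survivalProfile lam y).tendsto_slope_zero_right).const_mul y
    rw [show lam * y ^ 2 = y * (y * lam) by ring]
    refine h.congr fun b => ?_
    simp only [zero_add, survivalProfile_zero_right, sub_zero, smul_eq_mul]
    ring

lemma exists_pos_survivalMap_eq_self (hμ : ∀ᵐ y ∂μ, 0 ≤ y) (hid : Integrable (fun y => y) μ)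
    (hW2 : Integrable (fun y => y ^ 2) μ) (hlam : 0 < lam) (h : 1 < lam * ∫ y, y ^ 2 ∂μ) :
    ∃ b, 0 < b ∧ survivalMap μ lam b = b := by
  obtain ⟨b₀, hb₀Φ, hb₀ : 0 < b₀⟩ := (((tendsto_survivalMap_div hμ hW2 hlam.le).eventually
    (eventually_gt_nhds h)).and self_mem_nhdsWithin).exists
  rw [one_lt_div hb₀] at hb₀Φ
  set M := b₀ + ∫ y, y ∂μ
  have hb₀M : b₀ ≤ M := le_add_of_nonneg_right (integral_nonneg_of_ae hμ)
  have hcont : ContinuousOn (fun b => survivalMap μ lam b - b) (Icc b₀ M) :=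
    ((continuousOn_survivalMap hμ hid hlam.le).mono fun _ hb => hb₀.le.trans hb.1).sub
      continuousOn_id
  have hzero : (0 : ℝ) ∈ Icc (survivalMap μ lam M - M) (survivalMap μ lam b₀ - b₀) :=
    ⟨by linarith [survivalMap_le_integral hμ hid hlam.le (hb₀.le.trans hb₀M)], by linarith⟩
  obtain ⟨b, hb, hfix⟩ := intermediate_value_Icc' hb₀M hcont hzero
  exact ⟨b, hb₀.trans_le hb.1, sub_eq_zero.1 hfix⟩

lemma survivalMap_lt (hμ : ∀ᵐ y ∂μ, 0 ≤ y) (hμpos : 0 < μ (Ioi 0))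
    (hid : Integrable (fun y => y) μ) (hW2 : Integrable (fun y => y ^ 2) μ) (hlam : 0 < lam)
    (hb : 0 < b) : survivalMap μ lam b < lam * b * ∫ y, y ^ 2 ∂μ := by
  have hgap : 0 < ∫ y, (lam * b * y ^ 2 - y * survivalProfile lam b y) ∂μ := by
    refine integral_pos_of_pos_on_Ioi hμpos ?_
      ((hW2.const_mul _).sub (integrable_mul_survivalProfile hμ hid hlam.le hb.le))
      fun y hy => ?_
    · filter_upwards [hμ] with y hy using sub_nonneg.2 (mul_survivalProfile_le hy)
    · exact sub_pos.2 (mul_survivalProfile_lt hy hlam hb)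
  rw [integral_sub (hW2.const_mul _)
    (integrable_mul_survivalProfile hμ hid hlam.le hb.le), integral_const_mul] at hgap
  exact sub_pos.1 hgap

lemma one_lt_of_survivalMap_eq_self (hμ : ∀ᵐ y ∂μ, 0 ≤ y) (hid : Integrable (fun y => y) μ)
    (hW2 : Integrable (fun y => y ^ 2) μ) (hlam : 0 < lam) (hb : 0 < b)
    (hfix : survivalMap μ lam b = b) : 1 < lam * ∫ y, y ^ 2 ∂μ := by
  have hμpos := measure_Ioi_pos_of_integral_mul_ne_zero hμ (hfix.trans_ne hb.ne')
  have := survivalMap_lt hμ hμpos hid hW2 hlam hb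
  rw [hfix, mul_right_comm] at this
  exact (lt_mul_iff_one_lt_left hb).1 this

end SurvivalMap

namespace IsSurvivalFixedPoint

variable {μ : Measure ℝ} {lam : ℝ} {f : ℝ → ℝ}

lemma zero : IsSurvivalFixedPoint μ lam 0 := fun x _ => by simp

lemma of_survivalMap_eq {b : ℝ} (h : survivalMap μ lam b = b) :
    IsSurvivalFixedPoint μ lam (survivalProfile lam b) := fun x _ => by
  rw [← survivalMap, h]

lemma ae_eq (hf : IsSurvivalFixedPoint μ lam f) (hμ : ∀ᵐ y ∂μ, 0 ≤ y) :
    f =ᵐ[μ] survivalProfile lam (∫ y, y * f y ∂μ) := by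
  filter_upwards [hμ] with y hy using hf y hy

lemma survivalMap_eq (hf : IsSurvivalFixedPoint μ lam f) (hμ : ∀ᵐ y ∂μ, 0 ≤ y) :
    survivalMap μ lam (∫ y, y * f y ∂μ) = ∫ y, y * f y ∂μ :=
  integral_congr_ae <| by filter_upwards [hf.ae_eq hμ] with y hy using by rw [hy]

end IsSurvivalFixedPoint

/-- Theorem 2, second part. Let `W ≥ 0` have law `μ_W` with
`E W² = ∫ x² μ_W(dx) < ∞`, let `λ = 4 c log 2`, let `β` be the maximal solution of the
fixed-point equation `f(x) = 1 - exp(-x λ ∫ y f(y) μ_W(dy))` on `x ≥ 0`, and set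
`β̂ = ∫ β dμ_W`. Then `β̂ > 0` if and only if `λ E W² > 1`. -/
theorem weighted_survival_criterion
    (c : ℝ) (hc : 0 < c)
    (μW : Measure ℝ) [IsProbabilityMeasure μW]
    (hWnonneg : μW (Set.Iio 0) = 0)
    (hW2 : Integrable (fun x => x ^ 2) μW)
    (β : ℝ → ℝ)
    (hβ : ∀ x : ℝ, 0 ≤ x →
      β x = 1 - Real.exp (-(x * (4 * c * Real.log 2) * ∫ y, y * β y ∂μW)))
    (hβmax : ∀ f : ℝ → ℝ,
      (∀ x : ℝ, 0 ≤ x →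
        f x = 1 - Real.exp (-(x * (4 * c * Real.log 2) * ∫ y, y * f y ∂μW))) →
      ∀ x : ℝ, 0 ≤ x → f x ≤ β x) :
    0 < ∫ x, β x ∂μW ↔ 1 < (4 * c * Real.log 2) * ∫ x, x ^ 2 ∂μW := by
  set lam := 4 * c * Real.log 2
  have hlam : 0 < lam := by positivity
  have hμ : ∀ᵐ y ∂μW, 0 ≤ y := by
    simpa [ae_iff, not_le, Iio] using hWnonneg
  have hid := integrable_of_integrable_sq hW2
  have hβfix : IsSurvivalFixedPoint μW lam β := hβ
  have hβle : ∀ f, IsSurvivalFixedPoint μW lam f → ∀ x, 0 ≤ x → f x ≤ β x := hβmax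
  have hβeq := hβfix.ae_eq hμ
  rw [integral_congr_ae hβeq]
  set B := ∫ y, y * β y ∂μW
  have hB : 0 ≤ B := integral_nonneg_of_ae <| by
    filter_upwards [hμ] with y hy using mul_nonneg hy (hβle 0 .zero y hy)
  constructor
  · intro h
    have hBpos : 0 < B := hB.lt_of_ne fun h0 => by simp [← h0] at h
    exact one_lt_of_survivalMap_eq_self hμ hid hW2 hlam hBpos (hβfix.survivalMap_eq hμ)
  · intro h
    obtain ⟨b, hb, hfix⟩ := exists_pos_survivalMap_eq_self hμ hid hW2 hlam h
    have hμpos := measure_Ioi_pos_of_integral_mul_ne_zero hμ (hfix.trans_ne hb.ne')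
    calc 0 < ∫ x, survivalProfile lam b x ∂μW := integral_survivalProfile_pos hμ hμpos hlam hb
      _ ≤ ∫ x, survivalProfile lam B x ∂μW :=
        integral_mono_ae (integrable_survivalProfile hμ hlam.le hb.le)
          (integrable_survivalProfile hμ hlam.le hB) <| by
            filter_upwards [hμ, hβeq] with x hx hβx
            exact hβx ▸ hβle _ (.of_survivalMap_eq hfix) x hx
end

section
/- Let N be odd, c > 0, p_r = c/(Nr), and let N_r = 4r for 1 ≤ r ≤ ⌊N/2⌋ and N_r = 4(N−r) for ⌊N/2⌋ < r ≤ N. Then λ_N := Σ_{r=1}^{N} (−N_r·log(1 − p_r)) satisfies λ_N = 4c·log 2 − 2c/N + o(1/N) as N → ∞; that is, N·(λ_N − 4c·log 2) → −2c. -/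
/-!
Write `N = 2m + 1` and `p_r = c/(Nr)`. Since `-log(1 - p) = p + O(p²)` and `N_r ≤ 4r`, replacing
each `-log(1 - p_r)` by `p_r` costs at most `O(Σ r/(N r)²) = O(log N / N²)`. The linearised sum is
exact: `Σ N_r p_r = 4c (H_{2m+1} - H_m) - 4c/N`. Finally `log 2 = Σ_{r=m+1}^{2m+1} log(1 + 1/r)`, and
the trapezoid and midpoint bounds `2/(2r+1) ≤ log(1 + 1/r) ≤ (1/r + 1/(r+1))/2` telescope to
`H_{2m+1} - H_m = log 2 + 1/(2N) + O(1/N²)`.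
-/

open Filter

/-- For odd `N`, the number of vertices at distance `r` from a fixed vertex of the
discrete torus `(ℤ/Nℤ)²`: `N_r = 4r` for `1 ≤ r ≤ ⌊N/2⌋` and `N_r = 4(N-r)` for
`⌊N/2⌋ < r ≤ N`. -/
def Nr (N r : ℕ) : ℕ := if r ≤ N / 2 then 4 * r else 4 * (N - r)

open Finset Real Topology

lemma sum_Ioc_sub_telescope {M : Type*} [AddCommGroup M] (f : ℕ → M) {a b : ℕ} (hab : a ≤ b) :
    ∑ i ∈ Ioc a b, (f (i + 1) - f i) = f (b + 1) - f (a + 1) := by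
  rw [← Ico_add_one_add_one_eq_Ioc, sum_Ico_sub _ (by omega)]

lemma tendsto_inf_principal_odd {α : Type*} {f : ℕ → α} {l : Filter α}
    (h : Tendsto (fun m => f (2 * m + 1)) atTop l) :
    Tendsto f (atTop ⊓ 𝓟 {N | Odd N}) l := by
  intro s hs
  obtain ⟨M, hM⟩ := eventually_atTop.mp (h hs)
  rw [Filter.mem_map, mem_inf_principal]
  filter_upwards [eventually_ge_atTop (2 * M)] with N hN hodd
  obtain ⟨m, rfl⟩ := hodd
  exact hM m (by omega)

lemma abs_neg_log_one_sub_sub_le {x : ℝ} (hx : |x| ≤ 1 / 2) :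
    |-log (1 - x) - x| ≤ 2 * x ^ 2 := by
  have h := abs_log_sub_add_sum_range_le (x := x) (by linarith) 1
  simp only [range_one, sum_singleton, zero_add, pow_one, Nat.cast_zero, div_one] at h
  rw [show -log (1 - x) - x = -(x + log (1 - x)) by ring, abs_neg]
  refine h.trans ?_
  rw [div_le_iff₀ (by linarith), sq_abs]
  nlinarith [sq_nonneg x]

lemma two_div_two_mul_add_one_le_log_one_add_inv {a : ℝ} (ha : 0 < a) :
    2 / (2 * a + 1) ≤ log (1 + a⁻¹) := by
  have h := le_hasSum (hasSum_log_one_add_inv ha) 0 fun k _ => by positivity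
  simpa [div_eq_mul_inv] using h

lemma log_one_add_inv_le {a : ℝ} (ha : 0 < a) :
    log (1 + a⁻¹) ≤ (a⁻¹ + (a + 1)⁻¹) / 2 := by
  have hlog := hasSum_log_one_add_inv ha
  set t := 1 / (2 * a + 1) with ht
  have ht0 : 0 ≤ t := by positivity
  have ht2 : 1 - t ^ 2 = 4 * a * (a + 1) / (2 * a + 1) ^ 2 := by
    rw [ht]; field_simp; ring
  have hgeom : HasSum (fun k : ℕ => 2 * t * (t ^ 2) ^ k) (2 * t * (1 - t ^ 2)⁻¹) := by
    refine (hasSum_geometric_of_lt_one (by positivity) ?_).mul_left (2 * t)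
    nlinarith [ht2, show 0 < 4 * a * (a + 1) / (2 * a + 1) ^ 2 by positivity]
  calc log (1 + a⁻¹) ≤ 2 * t * (1 - t ^ 2)⁻¹ := by
        refine hasSum_le (fun k => ?_) hlog hgeom
        have hk : 1 / (2 * (k : ℝ) + 1) ≤ 1 := by
          rw [div_le_one (by positivity)]; linarith [k.cast_nonneg (α := ℝ)]
        calc 2 * (1 / (2 * (k : ℝ) + 1)) * t ^ (2 * k + 1) ≤ 2 * 1 * t ^ (2 * k + 1) := by
              gcongr
          _ = 2 * t * (t ^ 2) ^ k := by ring
    _ = (a⁻¹ + (a + 1)⁻¹) / 2 := by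
        rw [ht2, ht]; field_simp; ring

lemma sum_log_one_add_inv_eq_log_two (m : ℕ) :
    ∑ r ∈ Ioc m (2 * m + 1), log (1 + (r : ℝ)⁻¹) = log 2 := by
  have hterm : ∀ r ∈ Ioc m (2 * m + 1),
      log (1 + (r : ℝ)⁻¹) = log ((r + 1 : ℕ) : ℝ) - log (r : ℝ) := by
    intro r hr
    have hr0 : (r : ℝ) ≠ 0 := Nat.cast_ne_zero.mpr (by have := mem_Ioc.mp hr; omega)
    rw [← log_div (by positivity) hr0]
    congr 1
    push_cast
    field_simp
  rw [sum_congr rfl hterm, sum_Ioc_sub_telescope (fun r => log (r : ℝ)) (by omega)]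
  rw [← log_div (by positivity) (by positivity)]
  congr 1
  push_cast
  field_simp
  ring

lemma inv_four_mul_le_sum_inv_sub_log_two (m : ℕ) :
    (4 * (m + 1 : ℝ))⁻¹ ≤ ∑ r ∈ Ioc m (2 * m + 1), (r : ℝ)⁻¹ - log 2 := by
  have htrapezoid : log 2 ≤ ∑ r ∈ Ioc m (2 * m + 1), ((r : ℝ)⁻¹ + ((r + 1 : ℕ) : ℝ)⁻¹) / 2 := by
    rw [← sum_log_one_add_inv_eq_log_two m]
    refine sum_le_sum fun r hr => ?_
    have hr0 : (0 : ℝ) < r := Nat.cast_pos.mpr (by have := mem_Ioc.mp hr; omega)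
    push_cast
    exact log_one_add_inv_le hr0
  have htel : ∑ r ∈ Ioc m (2 * m + 1), ((r : ℝ)⁻¹ + ((r + 1 : ℕ) : ℝ)⁻¹) / 2 =
      ∑ r ∈ Ioc m (2 * m + 1), (r : ℝ)⁻¹ - (4 * (m + 1 : ℝ))⁻¹ := by
    set g : ℕ → ℝ := fun r => (r : ℝ)⁻¹ / 2
    calc ∑ r ∈ Ioc m (2 * m + 1), ((r : ℝ)⁻¹ + ((r + 1 : ℕ) : ℝ)⁻¹) / 2
        = ∑ r ∈ Ioc m (2 * m + 1), ((r : ℝ)⁻¹ + (g (r + 1) - g r)) :=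
          sum_congr rfl fun r _ => by simp only [g]; ring
      _ = ∑ r ∈ Ioc m (2 * m + 1), (r : ℝ)⁻¹ + (g (2 * m + 1 + 1) - g (m + 1)) := by
          rw [sum_add_distrib, sum_Ioc_sub_telescope g (by omega)]
      _ = ∑ r ∈ Ioc m (2 * m + 1), (r : ℝ)⁻¹ - (4 * (m + 1 : ℝ))⁻¹ := by
          simp only [g]
          push_cast
          field_simp
          ring
  linarith

lemma sum_inv_sub_log_two_le (m : ℕ) :
    ∑ r ∈ Ioc m (2 * m + 1), (r : ℝ)⁻¹ - log 2 ≤ (2 * m + 1 : ℝ)⁻¹ - (4 * m + 3 : ℝ)⁻¹ := by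
  have hmidpoint : ∑ r ∈ Ioc m (2 * m + 1), 2 / (2 * (r : ℝ) + 1) ≤ log 2 := by
    rw [← sum_log_one_add_inv_eq_log_two m]
    refine sum_le_sum fun r hr => ?_
    exact two_div_two_mul_add_one_le_log_one_add_inv
      (Nat.cast_pos.mpr (by have := mem_Ioc.mp hr; omega))
  have hterm : ∀ r ∈ Ioc m (2 * m + 1), (r : ℝ)⁻¹ - 2 / (2 * r + 1) ≤
      (2 * (r : ℝ) - 1)⁻¹ - (2 * ((r + 1 : ℕ) : ℝ) - 1)⁻¹ := by
    intro r hr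
    have hr : (1 : ℝ) ≤ r := Nat.one_le_cast.mpr (by have := mem_Ioc.mp hr; omega)
    have hgap : (2 * (r : ℝ) - 1)⁻¹ - (2 * ((r + 1 : ℕ) : ℝ) - 1)⁻¹ - ((r : ℝ)⁻¹ - 2 / (2 * r + 1))
        = 1 / (r * (2 * r - 1) * (2 * r + 1)) := by
      have : 2 * (r : ℝ) - 1 ≠ 0 := by linarith
      have : 2 * (r : ℝ) + 1 ≠ 0 := by linarith
      have : 2 * ((r : ℝ) + 1) - 1 ≠ 0 := by linarith
      have : (r : ℝ) ≠ 0 := by linarith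
      push_cast
      field_simp
      ring
    have : 0 ≤ 1 / ((r : ℝ) * (2 * r - 1) * (2 * r + 1)) :=
      one_div_nonneg.mpr (mul_nonneg (mul_nonneg (by linarith) (by linarith)) (by linarith))
    linarith
  have htel := sum_Ioc_sub_telescope (fun r => -(2 * (r : ℝ) - 1)⁻¹) (by omega : m ≤ 2 * m + 1)
  calc ∑ r ∈ Ioc m (2 * m + 1), (r : ℝ)⁻¹ - log 2
      ≤ ∑ r ∈ Ioc m (2 * m + 1), ((r : ℝ)⁻¹ - 2 / (2 * r + 1)) := by
        rw [sum_sub_distrib]; linarith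
    _ ≤ ∑ r ∈ Ioc m (2 * m + 1), ((2 * (r : ℝ) - 1)⁻¹ - (2 * ((r + 1 : ℕ) : ℝ) - 1)⁻¹) :=
        sum_le_sum hterm
    _ = (2 * m + 1 : ℝ)⁻¹ - (4 * m + 3 : ℝ)⁻¹ := by
        simp only [neg_sub_neg] at htel
        rw [htel]
        push_cast
        ring

lemma abs_mul_sum_inv_sub_log_two_sub_half_le (m : ℕ) :
    |(2 * m + 1 : ℝ) * (∑ r ∈ Ioc m (2 * m + 1), (r : ℝ)⁻¹ - log 2) - 1 / 2| ≤ 1 / ((m : ℝ) + 1) := by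
  have hm : (0 : ℝ) < m + 1 := by positivity
  rw [abs_sub_le_iff]
  constructor
  · calc (2 * m + 1 : ℝ) * (∑ r ∈ Ioc m (2 * m + 1), (r : ℝ)⁻¹ - log 2) - 1 / 2
        ≤ (2 * m + 1 : ℝ) * ((2 * m + 1 : ℝ)⁻¹ - (4 * m + 3 : ℝ)⁻¹) - 1 / 2 := by
          gcongr ?_ - _
          exact mul_le_mul_of_nonneg_left (sum_inv_sub_log_two_le m) (by positivity)
      _ = (2 * (4 * m + 3 : ℝ))⁻¹ := by
          field_simp
          ring
      _ ≤ 1 / ((m : ℝ) + 1) := by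
          rw [one_div]
          exact inv_anti₀ hm (by linarith)
  · calc 1 / 2 - (2 * m + 1 : ℝ) * (∑ r ∈ Ioc m (2 * m + 1), (r : ℝ)⁻¹ - log 2)
        ≤ 1 / 2 - (2 * m + 1 : ℝ) * (4 * (m + 1 : ℝ))⁻¹ := by
          gcongr _ - ?_
          exact mul_le_mul_of_nonneg_left (inv_four_mul_le_sum_inv_sub_log_two m) (by positivity)
      _ = (4 * (m + 1 : ℝ))⁻¹ := by
          field_simp
          ring
      _ ≤ 1 / ((m : ℝ) + 1) := by
          rw [one_div]
          exact inv_anti₀ hm (by linarith)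

lemma tendsto_mul_sum_inv_sub_log_two :
    Tendsto (fun m : ℕ => (2 * m + 1 : ℝ) * (∑ r ∈ Ioc m (2 * m + 1), (r : ℝ)⁻¹ - log 2))
      atTop (𝓝 (1 / 2)) := by
  rw [← tendsto_sub_nhds_zero_iff]
  exact squeeze_zero_norm abs_mul_sum_inv_sub_log_two_sub_half_le
    tendsto_one_div_add_atTop_nhds_zero_nat

lemma Nr_le_four_mul (N r : ℕ) : Nr N r ≤ 4 * r := by
  unfold Nr; split <;> omega

lemma sum_Nr_div_eq (m : ℕ) :
    ∑ r ∈ Icc 1 (2 * m + 1), (Nr (2 * m + 1) r : ℝ) / r =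
      4 * ((2 * m + 1) * ∑ r ∈ Ioc m (2 * m + 1), (r : ℝ)⁻¹ - 1) := by
  have hnear : ∑ r ∈ Ioc 0 m, (Nr (2 * m + 1) r : ℝ) / r = ∑ r ∈ Ioc 0 m, 4 := by
    refine sum_congr rfl fun r hr => ?_
    have hr := mem_Ioc.mp hr
    have hr0 : (r : ℝ) ≠ 0 := Nat.cast_ne_zero.mpr (by omega)
    rw [Nr, if_pos (by omega)]
    push_cast
    field_simp
  have hfar : ∑ r ∈ Ioc m (2 * m + 1), (Nr (2 * m + 1) r : ℝ) / r =
      ∑ r ∈ Ioc m (2 * m + 1), (4 * (2 * m + 1) * (r : ℝ)⁻¹ - 4) := by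
    refine sum_congr rfl fun r hr => ?_
    have hr := mem_Ioc.mp hr
    have hr0 : (r : ℝ) ≠ 0 := Nat.cast_ne_zero.mpr (by omega)
    rw [Nr, if_neg (by omega), Nat.cast_mul, Nat.cast_sub hr.2]
    push_cast
    field_simp
  rw [show Icc 1 (2 * m + 1) = Ioc 0 (2 * m + 1) by ext; simp; omega,
    ← sum_Ioc_consecutive _ (Nat.zero_le m) (by omega : m ≤ 2 * m + 1), hnear, hfar,
    sum_sub_distrib, ← mul_sum]
  simp only [sum_const, Nat.card_Ioc, Nat.sub_zero, nsmul_eq_mul]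
  push_cast [show 2 * m + 1 - m = m + 1 by omega]
  ring

noncomputable def lambdaN (c : ℝ) (N : ℕ) : ℝ :=
  ∑ r ∈ Icc 1 N, -((Nr N r : ℝ) * log (1 - c / (N * r)))

lemma abs_lambdaN_sub_le (c : ℝ) {N : ℕ} (hN : 2 * |c| ≤ N) :
    |lambdaN c N - c / N * ∑ r ∈ Icc 1 N, (Nr N r : ℝ) / r| ≤ 8 * c ^ 2 * (1 + log N) / N ^ 2 := by
  have hterm : ∀ r ∈ Icc 1 N, |-((Nr N r : ℝ) * log (1 - c / (N * r))) - c / N * (Nr N r / r)|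
      ≤ 8 * c ^ 2 / N ^ 2 * (r : ℝ)⁻¹ := by
    intro r hr
    have hr := mem_Icc.mp hr
    have hr0 : (1 : ℝ) ≤ r := by exact_mod_cast hr.1
    have hN0 : (1 : ℝ) ≤ N := by exact_mod_cast hr.1.trans hr.2
    have hx : |c / (N * r)| ≤ 1 / 2 := by
      have hNr0 : (0 : ℝ) < N * r := by positivity
      rw [abs_div, abs_of_pos hNr0, div_le_iff₀ hNr0]
      nlinarith [abs_nonneg c]
    have hNr : (Nr N r : ℝ) ≤ 4 * r := by exact_mod_cast Nr_le_four_mul N r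
    calc |-((Nr N r : ℝ) * log (1 - c / (N * r))) - c / N * (Nr N r / r)|
        = |(Nr N r : ℝ) * (-log (1 - c / (N * r)) - c / (N * r))| := by
          congr 1
          field_simp
      _ = Nr N r * |-log (1 - c / (N * r)) - c / (N * r)| := by
          rw [abs_mul, Nat.abs_cast]
      _ ≤ 4 * r * (2 * (c / (N * r)) ^ 2) := by
          gcongr
          exact abs_neg_log_one_sub_sub_le hx
      _ = 8 * c ^ 2 / N ^ 2 * (r : ℝ)⁻¹ := by
          field_simp
          ring
  have hharm : ∑ r ∈ Icc 1 N, (r : ℝ)⁻¹ ≤ 1 + log N := by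
    simpa [harmonic_eq_sum_Icc] using harmonic_le_one_add_log N
  calc |lambdaN c N - c / N * ∑ r ∈ Icc 1 N, (Nr N r : ℝ) / r|
      = |∑ r ∈ Icc 1 N, (-((Nr N r : ℝ) * log (1 - c / (N * r))) - c / N * (Nr N r / r))| := by
        rw [lambdaN, mul_sum, ← sum_sub_distrib]
    _ ≤ ∑ r ∈ Icc 1 N, 8 * c ^ 2 / N ^ 2 * (r : ℝ)⁻¹ :=
        (abs_sum_le_sum_abs _ _).trans (sum_le_sum hterm)
    _ ≤ 8 * c ^ 2 / N ^ 2 * (1 + log N) := by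
        rw [← mul_sum]
        gcongr
    _ = 8 * c ^ 2 * (1 + log N) / N ^ 2 := by ring

lemma tendsto_mul_lambdaN_sub (c : ℝ) :
    Tendsto (fun N : ℕ => N * (lambdaN c N - c / N * ∑ r ∈ Icc 1 N, (Nr N r : ℝ) / r))
      atTop (𝓝 0) := by
  have hlog : Tendsto (fun N : ℕ => log N / N) atTop (𝓝 0) :=
    isLittleO_log_id_atTop.tendsto_div_nhds_zero.comp tendsto_natCast_atTop_atTop
  have hinv : Tendsto (fun N : ℕ => (N : ℝ)⁻¹) atTop (𝓝 0) :=
    tendsto_inv_atTop_zero.comp tendsto_natCast_atTop_atTop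
  have hbound := ((hinv.add hlog).const_mul (8 * c ^ 2))
  rw [add_zero, mul_zero] at hbound
  refine squeeze_zero_norm' ?_ hbound
  filter_upwards [tendsto_natCast_atTop_atTop.eventually_ge_atTop (2 * |c|),
    eventually_gt_atTop 0] with N hN hN0
  have hN0' : (0 : ℝ) < N := by exact_mod_cast hN0
  rw [norm_mul, Real.norm_natCast, Real.norm_eq_abs]
  calc N * |lambdaN c N - c / N * ∑ r ∈ Icc 1 N, (Nr N r : ℝ) / r|
      ≤ N * (8 * c ^ 2 * (1 + log N) / N ^ 2) := by
        gcongr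
        exact abs_lambdaN_sub_le c hN
    _ = 8 * c ^ 2 * ((N : ℝ)⁻¹ + log N / N) := by
        field_simp

theorem lambdaN_asymptotics_general (c : ℝ) :
    Tendsto (fun N : ℕ =>
        (N : ℝ) * ((∑ r ∈ Finset.Icc 1 N,
            -((Nr N r : ℝ) * Real.log (1 - c / ((N : ℝ) * (r : ℝ))))) -
          4 * c * Real.log 2))
      (atTop ⊓ Filter.principal {N | Odd N}) (nhds (-(2 * c))) := by
  refine tendsto_inf_principal_odd ?_
  have hodd : Tendsto (fun m : ℕ => 2 * m + 1) atTop atTop :=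
    tendsto_atTop_mono (fun m => show m ≤ 2 * m + 1 by omega) tendsto_id
  have hlin := (tendsto_mul_lambdaN_sub c).comp hodd
  have hharm := tendsto_mul_sum_inv_sub_log_two.const_mul (4 * c)
  convert (hlin.add hharm).sub_const (4 * c) using 1
  · funext m
    have hN : (2 * m + 1 : ℝ) ≠ 0 := by positivity
    simp only [Function.comp_apply, lambdaN, sum_Nr_div_eq]
    push_cast
    linear_combination
      (4 * c * ((2 * m + 1) * ∑ r ∈ Ioc m (2 * m + 1), (r : ℝ)⁻¹ - 1)) * mul_inv_cancel₀ hN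
  · congr 1
    ring

/-- Let `p_r = c/(Nr)` and
`λ_N = Σ_{r=1}^N (-N_r log(1 - p_r))`. Then, as `N → ∞` through odd values,
`λ_N = 4c log 2 - 2c/N + o(1/N)`, i.e. `N (λ_N - 4c log 2) → -2c`. -/
theorem lambdaN_asymptotics (c : ℝ) (hc : 0 < c) :
    Tendsto (fun N : ℕ =>
        (N : ℝ) * ((∑ r ∈ Finset.Icc 1 N,
            -((Nr N r : ℝ) * Real.log (1 - c / ((N : ℝ) * (r : ℝ))))) -
          4 * c * Real.log 2))
      (atTop ⊓ Filter.principal {N | Odd N}) (nhds (-(2 * c))) :=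
  lambdaN_asymptotics_general c
end

section
/- Assume E[W²] < ∞. Then the expected number of edges e(G_{N,W}) of the random graph G_{N,W} satisfies (1/N²)·E[e(G_{N,W})] → (λ/2)·(E[W])² as N → ∞, where λ = 4c·log 2. -/
open MeasureTheory Filter

noncomputable section

/-- `d_N(i) = i` if `i ≤ N/2`, `N - i` otherwise. -/
def dN (N i : ℕ) : ℕ := if i ≤ N / 2 then i else N - i

/-- The graph distance on the discrete torus `(ℤ/Nℤ)²`. -/
def torusDist (N : ℕ) (u v : Fin N × Fin N) : ℕ :=
  dN N ((u.1.val : ℤ) - (v.1.val : ℤ)).natAbs + dN N ((u.2.val : ℤ) - (v.2.val : ℤ)).natAbs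

lemma natAbs_sub_comm' (a b : ℤ) : (a - b).natAbs = (b - a).natAbs := by omega

lemma torusDist_comm (N : ℕ) (u v : Fin N × Fin N) : torusDist N u v = torusDist N v u := by
  unfold torusDist
  rw [natAbs_sub_comm' ((u.1.val : ℤ)) ((v.1.val : ℤ)),
    natAbs_sub_comm' ((u.2.val : ℤ)) ((v.2.val : ℤ))]

/-- The edge probability `min{c W_u W_v / (N d(u,v)), 1}` as a function on unordered pairs. -/
def edgeProb (N : ℕ) (c : ℝ) (w : Fin N × Fin N → ℝ) : Sym2 (Fin N × Fin N) → ℝ :=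
  Sym2.lift ⟨fun u v => min (c * w u * w v / ((N : ℝ) * (torusDist N u v : ℝ))) 1, by
    intro u v
    dsimp only
    rw [torusDist_comm, mul_right_comm]⟩

/-- The random distance graph: given weights `w` and i.i.d. uniform variables `x` on the
unordered pairs, the pair `{u,v}` is an edge iff `x s(u,v) < edgeProb s(u,v)`; for uniform
`x` this happens with probability `min{c W_u W_v/(N d(u,v)), 1}`, independently over pairs. -/
def distGraph (N : ℕ) (c : ℝ) (w : Fin N × Fin N → ℝ)
    (x : Sym2 (Fin N × Fin N) → ℝ) : SimpleGraph (Fin N × Fin N) where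
  Adj u v := u ≠ v ∧ x s(u, v) < edgeProb N c w s(u, v)
  symm := by
    constructor
    intro u v h
    refine ⟨h.1.symm, ?_⟩
    rw [Sym2.eq_swap]
    exact h.2
  loopless := ⟨fun u h => h.1 rfl⟩

/-- The uniform distribution on `[0,1]`. -/
def unif01 : Measure ℝ := volume.restrict (Set.Icc 0 1)

/-- The measure governing the i.i.d. uniform variables attached to unordered pairs. -/
def edgeMeasure (N : ℕ) : Measure (Sym2 (Fin N × Fin N) → ℝ) :=
  Measure.pi fun _ => unif01

/-- Size of the largest connected component of a graph on a finite vertex set. -/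
def largestComponentSize {V : Type*} [Fintype V] (G : SimpleGraph V) : ℕ :=
  Finset.univ.sup fun v => Set.ncard {u | G.Reachable u v}

end

/-- The measure governing the random graph `G_{N,W}`: i.i.d. weights with law `μW` attached
to the vertices, together with i.i.d. uniform variables attached to the unordered pairs
(the pair `{u,v}` being an edge iff its uniform variable falls below
`min{c W_u W_v/(N d(u,v)), 1}`). -/
noncomputable def weightedMeasure (N : ℕ) (μW : Measure ℝ) :
    Measure ((Fin N × Fin N → ℝ) × (Sym2 (Fin N × Fin N) → ℝ)) :=
  (Measure.pi fun _ => μW).prod (edgeMeasure N)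

/-!
Conditionally on the weights, `{u, v}` is an edge with probability `min (c W_u W_v / t) 1` where
`t = N d(u, v)`; its mean is `T t / t` with `T t = E[min (c W W') t]`. As `T` is nondecreasing,
bounded by `c (E W)²` and tends to it, translation invariance squeezes `N⁻² E e(G)` between
`T N / 2` and `c (E W)² / 2` times `N⁻¹ ∑_{w ≠ 0} 1 / d(0, w)`. Folding the torus onto
`{0, …, ⌊N/2⌋}²` compares this lattice sum with four copies of
`∑_{1 ≤ a, b ≤ n} 1 / (a + b) = (2n + 1) H_{2n} - 2 (n + 1) H_n`, `n ≈ N / 2`, and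
`H_{2n} - H_n → log 2` gives the limit `4 log 2`.
-/

open Finset Topology Real Filter MeasureTheory ProbabilityTheory

lemma sum_Icc_inv_natCast_add (m n : ℕ) :
    ∑ a ∈ Icc 1 n, ((a : ℝ) + m)⁻¹ = harmonic (n + m) - harmonic m := by
  induction n with
  | zero => simp
  | succ n ih =>
    rw [sum_Icc_succ_top (by omega), ih, Nat.add_right_comm, harmonic_succ]
    push_cast
    ring

noncomputable def pairInvSum (n : ℕ) : ℝ := ∑ a ∈ Icc 1 n, ∑ b ∈ Icc 1 n, ((a : ℝ) + b)⁻¹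

lemma pairInvSum_eq (n : ℕ) :
    pairInvSum n = (2 * n + 1) * harmonic (2 * n) - 2 * (n + 1) * harmonic n := by
  induction n with
  | zero => simp [pairInvSum]
  | succ n ih =>
    have hrow : ∑ a ∈ Icc 1 n, ((a : ℝ) + (n + 1 : ℕ))⁻¹
        = harmonic (2 * n + 1) - harmonic (n + 1) := by
      rw [sum_Icc_inv_natCast_add]; ring_nf
    have hcol : ∑ b ∈ Icc 1 n, (((n + 1 : ℕ) : ℝ) + b)⁻¹
        = harmonic (2 * n + 1) - harmonic (n + 1) := by
      rw [← hrow]; simp only [add_comm]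
    have hstep : pairInvSum (n + 1) = pairInvSum n
        + 2 * (harmonic (2 * n + 1) - harmonic (n + 1)) + (((n + 1 : ℕ) : ℝ) + (n + 1 : ℕ))⁻¹ := by
      simp only [pairInvSum, sum_Icc_succ_top (by omega : 1 ≤ n + 1), sum_add_distrib, hrow, hcol]
      ring
    rw [hstep, ih, show 2 * (n + 1) = 2 * n + 1 + 1 by ring, harmonic_succ (2 * n + 1),
      harmonic_succ (2 * n), harmonic_succ n]
    push_cast
    field_simp
    ring

lemma tendsto_harmonic_div_self : Tendsto (fun n : ℕ => (harmonic n : ℝ) / n) atTop (𝓝 0) := by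
  have hlog : Tendsto (fun n : ℕ => log n / n) atTop (𝓝 0) :=
    isLittleO_log_id_atTop.tendsto_div_nhds_zero.comp tendsto_natCast_atTop_atTop
  have := (tendsto_harmonic_sub_log.mul tendsto_inv_atTop_nhds_zero_nat).add hlog
  rw [mul_zero, zero_add] at this
  refine this.congr fun n => ?_
  ring

lemma tendsto_harmonic_two_mul_sub :
    Tendsto (fun n : ℕ => (harmonic (2 * n) : ℝ) - harmonic n) atTop (𝓝 (log 2)) := by
  have h2 := tendsto_harmonic_sub_log.comp (tendsto_id.const_mul_atTop' (by norm_num : 0 < 2))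
  have := (h2.sub tendsto_harmonic_sub_log).add_const (log 2)
  rw [sub_self, zero_add] at this
  refine this.congr' ?_
  filter_upwards [eventually_ne_atTop 0] with n hn
  simp only [Function.comp_apply, id, Nat.cast_mul, Nat.cast_ofNat]
  rw [log_mul two_ne_zero (by exact_mod_cast hn)]
  ring

lemma tendsto_pairInvSum_div_self :
    Tendsto (fun n : ℕ => pairInvSum n / n) atTop (𝓝 (2 * log 2)) := by
  have h2 := tendsto_harmonic_div_self.comp (tendsto_id.const_mul_atTop' (by norm_num : 0 < 2))
  have := ((tendsto_harmonic_two_mul_sub.const_mul 2).add (h2.const_mul 2)).sub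
    (tendsto_harmonic_div_self.const_mul 2)
  rw [mul_zero, add_zero, sub_zero] at this
  refine this.congr' ?_
  filter_upwards [eventually_ne_atTop 0] with n hn
  simp only [Function.comp_apply, id, pairInvSum_eq, Nat.cast_mul, Nat.cast_ofNat]
  field_simp
  ring

lemma tendsto_comp_half_div_self {u : ℕ → ℝ} {L : ℝ}
    (hu : Tendsto (fun n => u n / n) atTop (𝓝 L)) {f : ℕ → ℕ}
    (hf : ∀ N, N ≤ 2 * f N + 2 ∧ 2 * f N ≤ N) :
    Tendsto (fun N => u (f N) / N) atTop (𝓝 (L / 2)) := by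
  have hf_top : Tendsto f atTop atTop :=
    tendsto_atTop_atTop.2 fun b => ⟨2 * b + 2, fun N hN => by have := hf N; omega⟩
  have hratio : Tendsto (fun N : ℕ => (f N : ℝ) / N) atTop (𝓝 (1 / 2)) := by
    have hlow : Tendsto (fun N : ℕ => 1 / 2 - 1 / (N : ℝ)) atTop (𝓝 (1 / 2)) := by
      simpa using tendsto_one_div_atTop_nhds_zero_nat.const_sub (1 / 2 : ℝ)
    refine tendsto_of_tendsto_of_tendsto_of_le_of_le' hlow tendsto_const_nhds ?_ ?_ <;>
      filter_upwards [eventually_gt_atTop 0] with N hN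
    · have : (N : ℝ) ≤ 2 * f N + 2 := by exact_mod_cast (hf N).1
      rw [le_div_iff₀ (by positivity)]
      field_simp
      linarith
    · have : 2 * (f N : ℝ) ≤ N := by exact_mod_cast (hf N).2
      rw [div_le_iff₀ (by positivity)]
      linarith
  have := (hu.comp hf_top).mul hratio
  rw [mul_one_div] at this
  refine this.congr' ?_
  filter_upwards [hf_top.eventually_ne_atTop 0] with N hN
  simp only [Function.comp_apply]
  field_simp

lemma sum_range_min_sub_eq {M : Type*} [AddCommMonoid M] {N : ℕ} (hN : N ≠ 0) (g : ℕ → M) :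
    ∑ i ∈ range N, g (min i (N - i))
      = ∑ a ∈ Icc 0 (N / 2), g a + ∑ a ∈ Icc 1 ((N - 1) / 2), g a := by
  rw [← sum_range_add_sum_Ico _ (show N / 2 + 1 ≤ N by omega), ← Nat.range_succ_eq_Icc_zero]
  congr 1
  · exact sum_congr rfl fun i hi => by rw [min_eq_left (by simp only [mem_range] at hi; omega)]
  · refine sum_nbij' (N - ·) (N - ·) ?_ ?_ ?_ ?_ ?_ <;> intro i hi <;>
      simp only [mem_Ico, mem_Icc] at hi ⊢
    all_goals first | omega | rw [min_eq_right (by omega)]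

lemma two_mul_sum_Icc_le_sum_range_min_sub {N : ℕ} (hN : N ≠ 0) {g : ℕ → ℝ}
    (hg : ∀ a, 0 ≤ g a) :
    2 * ∑ a ∈ Icc 1 ((N - 1) / 2), g a ≤ ∑ i ∈ range N, g (min i (N - i)) := by
  have : ∑ a ∈ Icc 1 ((N - 1) / 2), g a ≤ ∑ a ∈ Icc 0 (N / 2), g a :=
    sum_le_sum_of_subset_of_nonneg (Icc_subset_Icc (by omega) (by omega)) fun a _ _ => hg a
  rw [sum_range_min_sub_eq hN]
  linarith

lemma sum_range_min_sub_le_two_mul_sum_Icc {N : ℕ} (hN : N ≠ 0) {g : ℕ → ℝ}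
    (hg : ∀ a, 0 ≤ g a) :
    ∑ i ∈ range N, g (min i (N - i)) ≤ 2 * ∑ a ∈ Icc 0 (N / 2), g a := by
  have : ∑ a ∈ Icc 1 ((N - 1) / 2), g a ≤ ∑ a ∈ Icc 0 (N / 2), g a :=
    sum_le_sum_of_subset_of_nonneg (Icc_subset_Icc (by omega) (by omega)) fun a _ _ => hg a
  rw [sum_range_min_sub_eq hN]
  linarith

lemma sum_Icc_zero_sum_Icc_zero_inv_add (n : ℕ) :
    ∑ a ∈ Icc 0 n, ∑ b ∈ Icc 0 n, ((a : ℝ) + b)⁻¹ = pairInvSum n + 2 * harmonic n := by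
  have h0 : (0 : ℕ) ∉ Icc 1 n := by simp
  simp only [← insert_Icc_add_one_left_eq_Icc (Nat.zero_le n), zero_add, sum_insert h0,
    Nat.cast_zero, add_zero, inv_zero, sum_add_distrib, harmonic_eq_sum_Icc, pairInvSum]
  push_cast
  ring

/-- `∑_{w ∈ (ℤ/Nℤ)²} 1 / |w|` for the torus norm `|w| = d(0, w)`; the term `w = 0` is `0⁻¹ = 0`. -/
noncomputable def torusInvNormSum (N : ℕ) : ℝ :=
  ∑ i ∈ range N, ∑ j ∈ range N, ((min i (N - i) : ℕ) + (min j (N - j) : ℕ) : ℝ)⁻¹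

lemma four_mul_pairInvSum_le_torusInvNormSum {N : ℕ} (hN : N ≠ 0) :
    4 * pairInvSum ((N - 1) / 2) ≤ torusInvNormSum N := by
  calc 4 * pairInvSum ((N - 1) / 2)
      = 2 * ∑ a ∈ Icc 1 ((N - 1) / 2), 2 * ∑ b ∈ Icc 1 ((N - 1) / 2), ((a : ℝ) + b)⁻¹ := by
        rw [pairInvSum, ← mul_sum]; ring
    _ ≤ 2 * ∑ a ∈ Icc 1 ((N - 1) / 2), ∑ j ∈ range N, ((a : ℝ) + (min j (N - j) : ℕ))⁻¹ := by
        gcongr with a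
        exact two_mul_sum_Icc_le_sum_range_min_sub hN fun b => by positivity
    _ ≤ torusInvNormSum N :=
        two_mul_sum_Icc_le_sum_range_min_sub hN fun a => sum_nonneg fun j _ => by positivity

lemma torusInvNormSum_le {N : ℕ} (hN : N ≠ 0) :
    torusInvNormSum N ≤ 4 * (pairInvSum (N / 2) + 2 * harmonic (N / 2)) := by
  calc torusInvNormSum N
      ≤ 2 * ∑ a ∈ Icc 0 (N / 2), ∑ j ∈ range N, ((a : ℝ) + (min j (N - j) : ℕ))⁻¹ :=
        sum_range_min_sub_le_two_mul_sum_Icc hN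
          (g := fun a => ∑ j ∈ range N, ((a : ℝ) + (min j (N - j) : ℕ))⁻¹)
          fun a => sum_nonneg fun j _ => by positivity
    _ ≤ 2 * ∑ a ∈ Icc 0 (N / 2), 2 * ∑ b ∈ Icc 0 (N / 2), ((a : ℝ) + b)⁻¹ := by
        gcongr with a
        exact sum_range_min_sub_le_two_mul_sum_Icc hN (g := fun b => ((a : ℝ) + b)⁻¹)
          fun b => by positivity
    _ = 4 * (pairInvSum (N / 2) + 2 * harmonic (N / 2)) := by
        rw [← mul_sum, sum_Icc_zero_sum_Icc_zero_inv_add]; ring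

lemma tendsto_torusInvNormSum_div_self :
    Tendsto (fun N : ℕ => torusInvNormSum N / N) atTop (𝓝 (4 * log 2)) := by
  have hM := tendsto_comp_half_div_self tendsto_pairInvSum_div_self
    (f := fun N => (N - 1) / 2) fun N => by omega
  have hK := tendsto_comp_half_div_self tendsto_pairInvSum_div_self
    (f := fun N => N / 2) fun N => by omega
  have hH := tendsto_comp_half_div_self tendsto_harmonic_div_self
    (f := fun N => N / 2) fun N => by omega
  have hlow := hM.const_mul 4
  have hup := (hK.add (hH.const_mul 2)).const_mul 4
  rw [show 4 * (2 * log 2 / 2) = 4 * log 2 by ring] at hlow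
  rw [show 4 * (2 * log 2 / 2 + 2 * (0 / 2)) = 4 * log 2 by ring] at hup
  refine tendsto_of_tendsto_of_tendsto_of_le_of_le' hlow hup ?_ ?_ <;>
    filter_upwards [eventually_ne_atTop 0] with N hN
  · calc 4 * (pairInvSum ((N - 1) / 2) / N) = 4 * pairInvSum ((N - 1) / 2) / N := by ring
      _ ≤ torusInvNormSum N / N := by gcongr; exact four_mul_pairInvSum_le_torusInvNormSum hN
  · calc torusInvNormSum N / N ≤ 4 * (pairInvSum (N / 2) + 2 * harmonic (N / 2)) / N := by
          gcongr; exact torusInvNormSum_le hN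
      _ = _ := by ring

lemma dN_natAbs_sub {N : ℕ} (x y : Fin N) :
    dN N ((x : ℤ) - y).natAbs = min (x - y : Fin N).val (N - (x - y : Fin N).val) := by
  have hx := x.isLt
  have hy := y.isLt
  unfold dN
  rcases le_or_gt y x with h | h
  · rw [Fin.coe_sub_iff_le.2 h]
    split_ifs <;> omega
  · rw [Fin.coe_sub_iff_lt.2 h]
    split_ifs <;> omega

lemma torusDist_eq_min (N : ℕ) (u v : Fin N × Fin N) :
    torusDist N u v
      = min (u - v).1.val (N - (u - v).1.val) + min (u - v).2.val (N - (u - v).2.val) := by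
  simp only [torusDist, dN_natAbs_sub, Prod.fst_sub, Prod.snd_sub]

lemma torusDist_self (N : ℕ) (u : Fin N × Fin N) : torusDist N u u = 0 := by
  simp [torusDist, dN]

lemma torusDist_ne_zero {N : ℕ} {u v : Fin N × Fin N} (huv : u ≠ v) : torusDist N u v ≠ 0 := by
  intro h
  have := u.1.isLt; have := v.1.isLt; have := u.2.isLt; have := v.2.isLt
  simp only [torusDist, dN] at h
  exact huv (by ext <;> split_ifs at h <;> omega)

lemma sum_sum_torusDist {M : Type*} [AddCommMonoid M] (N : ℕ) (f : ℕ → M) :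
    ∑ u : Fin N × Fin N, ∑ v : Fin N × Fin N, f (torusDist N u v)
      = N ^ 2 • ∑ i ∈ range N, ∑ j ∈ range N, f (min i (N - i) + min j (N - j)) := by
  obtain rfl | hN := eq_or_ne N 0
  · simp
  have : NeZero N := ⟨hN⟩
  have hrow (u : Fin N × Fin N) : ∑ v, f (torusDist N u v)
      = ∑ i ∈ range N, ∑ j ∈ range N, f (min i (N - i) + min j (N - j)) := by
    rw [← Fintype.sum_equiv (Equiv.subLeft u)
      (fun w => f (min w.1.val (N - w.1.val) + min w.2.val (N - w.2.val))) _
      fun w => by simp [torusDist_eq_min], Fintype.sum_prod_type,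
      ← Fin.sum_univ_eq_sum_range (fun i => ∑ j ∈ range N, f (min i (N - i) + min j (N - j)))]
    simp only [← Fin.sum_univ_eq_sum_range (fun j => f (min _ (N - _) + min j (N - j)))]
  simp [hrow, card_univ, sq]

section TruncatedMean

variable {α : Type*} [MeasurableSpace α] {μ : Measure α} [IsFiniteMeasure μ] {X : α → ℝ}

lemma monotone_integral_min_const (hX : Integrable X μ) :
    Monotone fun t : ℝ => ∫ a, min (X a) t ∂μ := fun _ _ hst =>
  integral_mono (hX.inf (integrable_const _)) (hX.inf (integrable_const _))
    fun _ => min_le_min le_rfl hst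

lemma integral_min_const_le (hX : Integrable X μ) (t : ℝ) :
    ∫ a, min (X a) t ∂μ ≤ ∫ a, X a ∂μ :=
  integral_mono (hX.inf (integrable_const _)) hX fun _ => min_le_left _ _

lemma tendsto_integral_min_natCast (hX : Integrable X μ) :
    Tendsto (fun n : ℕ => ∫ a, min (X a) n ∂μ) atTop (𝓝 (∫ a, X a ∂μ)) := by
  refine tendsto_integral_of_dominated_convergence (fun a => |X a|)
    (fun n => (hX.inf (integrable_const _)).aestronglyMeasurable) hX.abs
    (fun n => ae_of_all _ fun a => ?_) (ae_of_all _ fun a => ?_)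
  · exact abs_le.2 ⟨le_min (neg_abs_le _) ((neg_nonpos.2 (abs_nonneg _)).trans n.cast_nonneg),
      (min_le_left _ _).trans (le_abs_self _)⟩
  · refine tendsto_const_nhds.congr' ?_
    filter_upwards [eventually_ge_atTop ⌈X a⌉₊] with n hn
    exact (min_eq_left ((Nat.le_ceil _).trans (by exact_mod_cast hn))).symm

end TruncatedMean

lemma tendsto_sum_range_div_torusNorm {T : ℝ → ℝ} {B : ℝ} (hT : Monotone T)
    (hB : ∀ t, T t ≤ B) (hlim : Tendsto (fun n : ℕ => T n) atTop (𝓝 B)) :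
    Tendsto (fun N : ℕ => ∑ i ∈ range N, ∑ j ∈ range N,
        T (N * (min i (N - i) + min j (N - j) : ℕ)) / (N * (min i (N - i) + min j (N - j) : ℕ)))
      atTop (𝓝 (B * (4 * log 2))) := by
  have hterm {N : ℕ} (hN : N ≠ 0) (k : ℕ) : T N * ((k : ℝ)⁻¹ / N) ≤ T (N * k) / (N * k) ∧
      T (N * k) / (N * k) ≤ B * ((k : ℝ)⁻¹ / N) := by
    obtain rfl | hk := eq_or_ne k 0
    · simp
    have hNk : (N : ℝ) ≤ N * k :=
      le_mul_of_one_le_right N.cast_nonneg (by exact_mod_cast Nat.one_le_iff_ne_zero.2 hk)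
    have hdiv (C : ℝ) : C * ((k : ℝ)⁻¹ / N) = C / (N * k) := by ring
    rw [hdiv, hdiv]
    exact ⟨by gcongr; exact hT hNk, by gcongr; exact hB _⟩
  have hsum (N : ℕ) (C : ℝ) : ∑ i ∈ range N, ∑ j ∈ range N,
      C * ((((min i (N - i) + min j (N - j) : ℕ)) : ℝ)⁻¹ / N) = C * (torusInvNormSum N / N) := by
    simp only [torusInvNormSum, mul_sum, sum_div, Nat.cast_add]
  refine tendsto_of_tendsto_of_tendsto_of_le_of_le' (hlim.mul tendsto_torusInvNormSum_div_self)
    (tendsto_torusInvNormSum_div_self.const_mul B) ?_ ?_ <;>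
    filter_upwards [eventually_ne_atTop 0] with N hN <;> rw [← hsum] <;>
    refine sum_le_sum fun i _ => sum_le_sum fun j _ => ?_
  exacts [(hterm hN _).1, (hterm hN _).2]

lemma SimpleGraph.sum_sum_ite_adj {V : Type*} [Fintype V] (G : SimpleGraph V)
    [DecidableRel G.Adj] :
    ∑ u, ∑ v, (if G.Adj u v then 1 else 0 : ℝ) = 2 * G.edgeSet.ncard := by
  classical
  have hdeg (u : V) : ∑ v, (if G.Adj u v then 1 else 0 : ℝ) = G.degree u := by
    simp [sum_boole, ← G.card_neighborFinset_eq_degree, G.neighborFinset_eq_filter]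
  simp only [hdeg, ← Nat.cast_sum, G.sum_degrees_eq_twice_card_edges, ← G.coe_edgeFinset,
    Set.ncard_coe_finset]
  push_cast
  ring

lemma integral_ncard_edgeSet {Ω V : Type*} [MeasurableSpace Ω] (μ : Measure Ω)
    [IsFiniteMeasure μ] [Fintype V] (G : Ω → SimpleGraph V)
    (hG : ∀ u v, MeasurableSet {ω | (G ω).Adj u v}) :
    ∫ ω, ((G ω).edgeSet.ncard : ℝ) ∂μ = (∑ u, ∑ v, μ.real {ω | (G ω).Adj u v}) / 2 := by
  classical
  have hind (u v : V) : (fun ω => if (G ω).Adj u v then (1 : ℝ) else 0)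
      = {ω | (G ω).Adj u v}.indicator 1 := by
    ext ω; simp [Set.indicator_apply]
  have hint (u v : V) : Integrable (fun ω => if (G ω).Adj u v then (1 : ℝ) else 0) μ := by
    rw [hind]; exact (integrable_const 1).indicator (hG u v)
  simp_rw [eq_div_iff (two_ne_zero : (2 : ℝ) ≠ 0), ← integral_mul_const, mul_comm _ (2 : ℝ),
    ← SimpleGraph.sum_sum_ite_adj]
  rw [integral_finsetSum _ fun u _ => integrable_finsetSum _ fun v _ => hint u v]
  refine sum_congr rfl fun u _ => ?_
  rw [integral_finsetSum _ fun v _ => hint u v]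
  exact sum_congr rfl fun v _ => by rw [hind, integral_indicator_one (hG u v)]

instance : IsProbabilityMeasure unif01 :=
  ⟨by simp [unif01]⟩

instance (N : ℕ) : IsProbabilityMeasure (edgeMeasure N) := by
  unfold edgeMeasure; infer_instance

instance (N : ℕ) (μW : Measure ℝ) [IsProbabilityMeasure μW] :
    IsProbabilityMeasure (weightedMeasure N μW) := by
  unfold weightedMeasure; infer_instance

lemma unif01_Iio {p : ℝ} (hp : p ≤ 1) : unif01 (Set.Iio p) = ENNReal.ofReal p := by
  have hset : Set.Iio p ∩ Set.Icc 0 1 = Set.Ico 0 p := by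
    ext x
    simp only [Set.mem_inter_iff, Set.mem_Iio, Set.mem_Icc, Set.mem_Ico]
    exact ⟨fun ⟨h, h0, _⟩ => ⟨h0, h⟩, fun ⟨h0, h⟩ => ⟨h, h0, by linarith⟩⟩
  rw [unif01, Measure.restrict_apply measurableSet_Iio, hset, Real.volume_Ico, sub_zero]

lemma measureReal_prod_pi_unif01_lt {α ι : Type*} [MeasurableSpace α] [Fintype ι]
    (ν : Measure α) [IsProbabilityMeasure ν] (i : ι) {g : α → ℝ} (hg : Measurable g)
    (hg01 : ∀ᵐ a ∂ν, g a ∈ Set.Icc 0 1) :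
    (ν.prod (Measure.pi fun _ : ι => unif01)).real {ω | ω.2 i < g ω.1} = ∫ a, g a ∂ν := by
  have hs : MeasurableSet {ω : α × (ι → ℝ) | ω.2 i < g ω.1} :=
    measurableSet_lt ((measurable_pi_apply i).comp measurable_snd) (hg.comp measurable_fst)
  have hfiber (a : α) : (Measure.pi fun _ : ι => unif01) (Prod.mk a ⁻¹' {ω | ω.2 i < g ω.1})
      = unif01 (Set.Iio (g a)) :=
    (measurePreserving_eval (fun _ => unif01) i).measure_preimage
      (s := Set.Iio (g a)) measurableSet_Iio.nullMeasurableSet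
  have hint : Integrable g ν :=
    .of_bound hg.aestronglyMeasurable 1 (hg01.mono fun a ha => by
      rw [Real.norm_eq_abs, abs_of_nonneg ha.1]; exact ha.2)
  rw [measureReal_def, Measure.prod_apply hs, lintegral_congr_ae (hg01.mono fun a ha => by
    rw [hfiber, unif01_Iio ha.2]), ← ofReal_integral_eq_lintegral_ofReal hint
    (hg01.mono fun a ha => ha.1), ENNReal.toReal_ofReal (integral_nonneg_of_ae
    (hg01.mono fun a ha => ha.1))]

lemma map_pi_eval_pair {ι α : Type*} [Fintype ι] [MeasurableSpace α] (μ : Measure α)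
    [IsProbabilityMeasure μ] {u v : ι} (huv : u ≠ v) :
    (Measure.pi fun _ : ι => μ).map (fun w => (w u, w v)) = μ.prod μ := by
  have hind : iIndepFun (fun i (w : ι → α) => w i) (Measure.pi fun _ => μ) :=
    iIndepFun_pi (X := fun _ => id) fun _ => aemeasurable_id
  rw [(hind.indepFun huv).map_prod_eq_prod_map_map (measurable_pi_apply u).aemeasurable
    (measurable_pi_apply v).aemeasurable, (measurePreserving_eval _ u).map_eq,
    (measurePreserving_eval _ v).map_eq]

lemma measurableSet_distGraph_adj (N : ℕ) (c : ℝ) (u v : Fin N × Fin N) :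
    MeasurableSet {ω : (Fin N × Fin N → ℝ) × (Sym2 (Fin N × Fin N) → ℝ) |
      (distGraph N c ω.1 ω.2).Adj u v} := by
  simp only [distGraph, edgeProb, Sym2.lift_mk, Set.ofPred_and]
  exact (MeasurableSet.const _).inter (measurableSet_lt (by fun_prop) (by fun_prop))

/-- For `u = v` both sides vanish: the left one because the graph is loopless, the right one
because `torusDist N u u = 0` and `x / 0 = 0`. -/
lemma measureReal_distGraph_adj (N : ℕ) {c : ℝ} (hc : 0 ≤ c) {μW : Measure ℝ}
    [IsProbabilityMeasure μW] (hW : ∀ᵐ x ∂μW, 0 ≤ x) (u v : Fin N × Fin N) :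
    (weightedMeasure N μW).real {ω | (distGraph N c ω.1 ω.2).Adj u v}
      = (∫ p, min (c * p.1 * p.2) (N * torusDist N u v) ∂(μW.prod μW))
          / (N * torusDist N u v) := by
  obtain rfl | huv := eq_or_ne u v
  · simp [distGraph, torusDist_self]
  set t : ℝ := N * torusDist N u v
  have ht : 0 < t := by
    have : 0 < N := u.1.pos
    have := torusDist_ne_zero huv
    positivity
  set ψ : ℝ × ℝ → ℝ := fun p => min (c * p.1 * p.2 / t) 1
  have hψ : Measurable ψ := by fun_prop
  have hpair : Measurable fun w : Fin N × Fin N → ℝ => (w u, w v) :=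
    (measurable_pi_apply u).prodMk (measurable_pi_apply v)
  have hset : {ω : (Fin N × Fin N → ℝ) × _ | (distGraph N c ω.1 ω.2).Adj u v}
      = {ω | ω.2 s(u, v) < ψ (ω.1 u, ω.1 v)} := by
    ext ω
    simp only [distGraph, Set.mem_ofPred_eq, ne_eq, huv, not_false_eq_true, true_and, edgeProb,
      Sym2.lift_mk, ψ, t]
  have h01 : ∀ᵐ w ∂(Measure.pi fun _ : Fin N × Fin N => μW), ψ (w u, w v) ∈ Set.Icc 0 1 := by
    filter_upwards [(measurePreserving_eval _ u).quasiMeasurePreserving.ae hW,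
      (measurePreserving_eval _ v).quasiMeasurePreserving.ae hW] with w hu hv
    exact ⟨le_min (by positivity) zero_le_one, min_le_right _ _⟩
  rw [hset, weightedMeasure, edgeMeasure,
    measureReal_prod_pi_unif01_lt (Measure.pi fun _ => μW) s(u, v)
      (g := fun w => ψ (w u, w v)) (hψ.comp hpair) h01,
    ← integral_map hpair.aemeasurable hψ.aestronglyMeasurable, map_pi_eval_pair μW huv,
    ← integral_div]
  refine integral_congr_ae (ae_of_all _ fun p => ?_)
  show min _ 1 = min _ t / t
  rw [← min_div_div_right ht.le, div_self ht.ne']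

/-- Assume `E W² < ∞`. Then the expected number of edges of `G_{N,W}`
satisfies `(1/N²) E[e(G_{N,W})] → (λ/2) (E W)²` as `N → ∞`, where `λ = 4 c log 2`. -/
theorem expected_edges_asymptotics
    (c : ℝ) (hc : 0 < c)
    (μW : Measure ℝ) [IsProbabilityMeasure μW]
    (hWnonneg : μW (Set.Iio 0) = 0)
    (hW2 : Integrable (fun x => x ^ 2) μW) :
    Tendsto (fun N : ℕ =>
        (1 / (N : ℝ) ^ 2) *
          ∫ ω, ((distGraph N c ω.1 ω.2).edgeSet.ncard : ℝ) ∂(weightedMeasure N μW))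
      atTop (nhds ((4 * c * Real.log 2) / 2 * (∫ x, x ∂μW) ^ 2)) := by
  have hW : ∀ᵐ x ∂μW, 0 ≤ x := ae_iff.2 (by simp only [not_le]; exact hWnonneg)
  have hint : Integrable id μW :=
    ((memLp_two_iff_integrable_sq aestronglyMeasurable_id).2 hW2).integrable one_le_two
  have hX : Integrable (fun p : ℝ × ℝ => c * p.1 * p.2) (μW.prod μW) :=
    (hint.const_mul c).mul_prod hint
  have hXmean : ∫ p : ℝ × ℝ, c * p.1 * p.2 ∂(μW.prod μW) = c * (∫ x, x ∂μW) ^ 2 := by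
    rw [integral_prod_mul (fun x => c * x) (fun x => x), integral_const_mul]; ring
  have hlim := tendsto_sum_range_div_torusNorm (monotone_integral_min_const hX)
    (integral_min_const_le hX) (tendsto_integral_min_natCast hX)
  rw [hXmean] at hlim
  convert (hlim.const_mul (1 / 2)).congr' ?_ using 2
  · ring
  filter_upwards [eventually_ne_atTop 0] with N hN
  rw [integral_ncard_edgeSet _ _ (measurableSet_distGraph_adj N c)]
  simp only [measureReal_distGraph_adj N hc.le hW]
  rw [sum_sum_torusDist N fun k => (∫ p, min (c * p.1 * p.2) (N * k) ∂(μW.prod μW)) / (N * k)]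
  field_simp
  simp
end
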